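/- Let ψ_ABC be a pure tripartite state on finite-dimensional systems. Then N_sq(A;C|B)_ψ = (1/2)·I(A;C|B)_ψ = (1/2)·I(A;C)_ψ, where I(A;C)_ψ := S(A)_ψ + S(C)_ψ − S(AC)_ψ is the quantum mutual information. Moreover, if ψ_ABC = φ_AC ⊗ ϕ_B is a product of a pure state φ on AC and a pure state ϕ on B, then N_sq(A;C|B)_ψ = (1/2)·I(A;C)_φ = S(A)_φ. -/

import Mathlib

open Matrix
open scoped ComplexOrder
open scoped BigOperators

noncomputable section

namespace SQNM

/-- A density matrix: positive semidefinite with unit trace. -/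
def IsDensity {n : Type*} [Fintype n] (ρ : Matrix n n ℂ) : Prop :=
  ρ.PosSemidef ∧ ρ.trace = 1

/-- A pure state: a rank-one projector `|v⟩⟨v|`. -/
def IsPure {n : Type*} (ρ : Matrix n n ℂ) : Prop :=
  ∃ v : n → ℂ, ρ = Matrix.vecMulVec v (star v)

/-- von Neumann entropy (in bits, i.e. base-2 logarithm), via the eigenvalues. -/
def vnEntropy {n : Type*} [Fintype n] [DecidableEq n] (ρ : Matrix n n ℂ) : ℝ :=
  if h : ρ.IsHermitian then -∑ i, h.eigenvalues i * Real.logb 2 (h.eigenvalues i) else 0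

/-- Trace norm `‖M‖₁ = Tr √(MᴴM)`. -/
def traceNorm {n : Type*} [Fintype n] [DecidableEq n] (M : Matrix n n ℂ) : ℝ :=
  ((((Matrix.posSemidef_conjTranspose_mul_self M).1.eigenvectorUnitary : Matrix n n ℂ) *
      Matrix.diagonal (fun i => ((Real.sqrt
        ((Matrix.posSemidef_conjTranspose_mul_self M).1.eigenvalues i) : ℝ) : ℂ)) *
      (star (Matrix.posSemidef_conjTranspose_mul_self M).1.eigenvectorUnitary :
        Matrix n n ℂ))).trace.re

/-- Binary Shannon entropy (base 2). -/
def binEnt (x : ℝ) : ℝ := -(x * Real.logb 2 x) - (1 - x) * Real.logb 2 (1 - x)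

section Tripartite

variable {α β γ : Type*} [Fintype α] [Fintype β] [Fintype γ]
variable [DecidableEq α] [DecidableEq β] [DecidableEq γ]

/-- Marginal on `A × B` of a tripartite state. -/
def margAB (ρ : Matrix (α × β × γ) (α × β × γ) ℂ) : Matrix (α × β) (α × β) ℂ :=
  fun x y => ∑ c : γ, ρ (x.1, x.2, c) (y.1, y.2, c)

/-- Marginal on `B × C` of a tripartite state. -/
def margBC (ρ : Matrix (α × β × γ) (α × β × γ) ℂ) : Matrix (β × γ) (β × γ) ℂ :=
  fun x y => ∑ a : α, ρ (a, x.1, x.2) (a, y.1, y.2)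

/-- Marginal on `A × C` of a tripartite state. -/
def margAC (ρ : Matrix (α × β × γ) (α × β × γ) ℂ) : Matrix (α × γ) (α × γ) ℂ :=
  fun x y => ∑ b : β, ρ (x.1, b, x.2) (y.1, b, y.2)

/-- Marginal on `A`. -/
def margA (ρ : Matrix (α × β × γ) (α × β × γ) ℂ) : Matrix α α ℂ :=
  fun a a' => ∑ b : β, ∑ c : γ, ρ (a, b, c) (a', b, c)

/-- Marginal on `B`. -/
def margB (ρ : Matrix (α × β × γ) (α × β × γ) ℂ) : Matrix β β ℂ :=
  fun b b' => ∑ a : α, ∑ c : γ, ρ (a, b, c) (a, b', c)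

/-- Marginal on `C`. -/
def margC (ρ : Matrix (α × β × γ) (α × β × γ) ℂ) : Matrix γ γ ℂ :=
  fun c c' => ∑ a : α, ∑ b : β, ρ (a, b, c) (a, b, c')

/-- Quantum conditional mutual information
`I(A;C|B)_ρ = S(AB) + S(BC) − S(ABC) − S(B)` (in bits). -/
def qcmi (ρ : Matrix (α × β × γ) (α × β × γ) ℂ) : ℝ :=
  vnEntropy (margAB ρ) + vnEntropy (margBC ρ) - vnEntropy ρ - vnEntropy (margB ρ)

/-- Quantum mutual information `I(A;C)` of the `AC` marginal. -/
def mutInfoAC (ρ : Matrix (α × β × γ) (α × β × γ) ℂ) : ℝ :=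
  vnEntropy (margA ρ) + vnEntropy (margC ρ) - vnEntropy (margAC ρ)

/-- Coherent information `I(A⟩C) = S(C) − S(AC)` of the `AC` marginal. -/
def cohInfoAC (ρ : Matrix (α × β × γ) (α × β × γ) ℂ) : ℝ :=
  vnEntropy (margC ρ) - vnEntropy (margAC ρ)

/-- Coherent information `I(C⟩A) = S(A) − S(AC)` of the `AC` marginal. -/
def cohInfoCA (ρ : Matrix (α × β × γ) (α × β × γ) ℂ) : ℝ :=
  vnEntropy (margA ρ) - vnEntropy (margAC ρ)

/-- Partial trace over the extension system `E` of a state on `A × B × C × E`. -/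
def traceExt {ε : Type*} [Fintype ε] (τ : Matrix (α × β × γ × ε) (α × β × γ × ε) ℂ) :
    Matrix (α × β × γ) (α × β × γ) ℂ :=
  fun x y => ∑ e : ε, τ (x.1, x.2.1, x.2.2, e) (y.1, y.2.1, y.2.2, e)

/-- Regroup a state on `A × B × C × E` as a tripartite state on `A × (B × E) × C`,
so that `B E` becomes the conditioning system. -/
def condExt {ε : Type*} (τ : Matrix (α × β × γ × ε) (α × β × γ × ε) ℂ) :
    Matrix (α × (β × ε) × γ) (α × (β × ε) × γ) ℂ :=
  fun x y => τ (x.1, x.2.1.1, x.2.2, x.2.1.2) (y.1, y.2.1.1, y.2.2, y.2.1.2)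

/-- Squashed quantum non-Markovianity
`N_sq(A;C|B)_ρ = (1/2) inf_{ρ_{ABCE}} I(A;C|BE)`, the infimum running over all
finite-dimensional extensions of `ρ` (every finite-dimensional extension system
can be relabelled to some `Fin d`). -/
def sQNM (ρ : Matrix (α × β × γ) (α × β × γ) ℂ) : ℝ :=
  (1/2) * sInf { x : ℝ |
    ∃ (d : ℕ) (τ : Matrix (α × β × γ × Fin d) (α × β × γ × Fin d) ℂ),
      IsDensity τ ∧ traceExt τ = ρ ∧ x = qcmi (condExt τ) }

end Tripartite

/-- Squashed entanglement of a bipartite state `σ_{AC}`: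
`E_sq(A;C)_σ = (1/2) inf_{σ_{ACF}} I(A;C|F)`. -/
def sqEnt {α γ : Type*} [Fintype α] [Fintype γ] [DecidableEq α] [DecidableEq γ]
    (σ : Matrix (α × γ) (α × γ) ℂ) : ℝ :=
  (1/2) * sInf { x : ℝ |
    ∃ (d : ℕ) (τ : Matrix (α × Fin d × γ) (α × Fin d × γ) ℂ),
      IsDensity τ ∧ margAC τ = σ ∧ x = qcmi τ }

section Channels

variable {n m : Type*}

/-- Apply a map `Φ` on the right tensor factor: `(id_κ ⊗ Φ) M`. -/
def applyRight {κ : Type*} (Φ : Matrix n n ℂ → Matrix m m ℂ)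
    (M : Matrix (κ × n) (κ × n) ℂ) : Matrix (κ × m) (κ × m) ℂ :=
  fun x y => Φ (fun u v => M (x.1, u) (y.1, v)) x.2 y.2

/-- A completely positive (linear) map on matrices. -/
def IsCPMap [Fintype n] [Fintype m] (Φ : Matrix n n ℂ → Matrix m m ℂ) : Prop :=
  (∀ (c : ℂ) (M N : Matrix n n ℂ), Φ (c • M + N) = c • Φ M + Φ N) ∧
  (∀ (k : ℕ) (M : Matrix (Fin k × n) (Fin k × n) ℂ),
      M.PosSemidef → (applyRight Φ M).PosSemidef)

/-- A quantum channel: completely positive and trace preserving linear map. -/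
def IsCPTP [Fintype n] [Fintype m] (Φ : Matrix n n ℂ → Matrix m m ℂ) : Prop :=
  IsCPMap Φ ∧ ∀ M : Matrix n n ℂ, (Φ M).trace = M.trace

end Channels

section Apply

variable {α β γ : Type*}

/-- Apply a map on the `A` subsystem of a tripartite state: `(Φ ⊗ id_{BC}) ρ`. -/
def applyA {α' : Type*} (Φ : Matrix α α ℂ → Matrix α' α' ℂ)
    (ρ : Matrix (α × β × γ) (α × β × γ) ℂ) : Matrix (α' × β × γ) (α' × β × γ) ℂ :=
  fun x y => Φ (fun a a' => ρ (a, x.2) (a', y.2)) x.1 y.1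

/-- Apply a map on the `B` subsystem of a tripartite state: `(id_A ⊗ Φ ⊗ id_C) ρ`. -/
def applyB {β' : Type*} (Φ : Matrix β β ℂ → Matrix β' β' ℂ)
    (ρ : Matrix (α × β × γ) (α × β × γ) ℂ) : Matrix (α × β' × γ) (α × β' × γ) ℂ :=
  fun x y => Φ (fun b b' => ρ (x.1, b, x.2.2) (y.1, b', y.2.2)) x.2.1 y.2.1

/-- Apply a map on the `C` subsystem of a tripartite state: `(id_{AB} ⊗ Φ) ρ`. -/
def applyC {γ' : Type*} (Φ : Matrix γ γ ℂ → Matrix γ' γ' ℂ)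
    (ρ : Matrix (α × β × γ) (α × β × γ) ℂ) : Matrix (α × β × γ') (α × β × γ') ℂ :=
  fun x y => Φ (fun c c' => ρ (x.1, x.2.1, c) (y.1, y.2.1, c')) x.2.2 y.2.2

end Apply

/-- The `n`-fold tensor power of a tripartite state, with the copies of each
subsystem grouped together: a state on `A^n × B^n × C^n`. -/
def tpow {α β γ : Type*} (ρ : Matrix (α × β × γ) (α × β × γ) ℂ) (n : ℕ) :
    Matrix ((Fin n → α) × (Fin n → β) × (Fin n → γ))
           ((Fin n → α) × (Fin n → β) × (Fin n → γ)) ℂ :=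
  fun x y => ∏ i, ρ (x.1 i, x.2.1 i, x.2.2 i) (y.1 i, y.2.1 i, y.2.2 i)

/-!
Write `ψ = |v⟩⟨v|` and let `τ_{ABCE}` extend it. For the isometry `V = v ⊗ 1_E`,
`Tr[(1 - VV†) τ (1 - VV†)] = Tr τ - Tr[V† τ V] = 0`, so `τ = VV† τ VV† = ψ ⊗ σ_E` with
`σ = V† τ V`. Entropy is additive on tensor products and `S(σ)` enters the four terms of
`I(A;C|BE)` with cancelling signs, so every extension gives `I(A;C|B)_ψ` and the infimum is
attained. Complementary marginals of a pure state are `W W†` and `(W† W)ᵀ` for a reshaping `W` of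
`v`, so they have the same nonzero spectrum and the same entropy; this turns `I(A;C|B)_ψ` into
`I(A;C)_ψ`, and for `ψ = φ ⊗ ϕ` into `S(A)_φ + S(C)_φ - S(AC)_φ = 2 S(A)_φ`.
-/

lemma isDensity_vecMulVec_iff {n : Type*} [Fintype n] {v : n → ℂ} :
    IsDensity (vecMulVec v (star v)) ↔ star v ⬝ᵥ v = 1 := by
  rw [IsDensity, trace_vecMulVec, dotProduct_comm]
  exact and_iff_right (posSemidef_vecMulVec_self_star v)

section Entropy

open Polynomial

variable {m n : Type*} [Fintype m] [DecidableEq m] [Fintype n] [DecidableEq n]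

def rootEntropy (s : Multiset ℂ) : ℝ := -(s.map fun z => z.re * Real.logb 2 z.re).sum

lemma rootEntropy_add (s t : Multiset ℂ) : rootEntropy (s + t) = rootEntropy s + rootEntropy t := by
  simp [rootEntropy, add_comm]

lemma rootEntropy_nsmul_zero (k : ℕ) : rootEntropy (k • {0}) = 0 := by
  simp [rootEntropy, Multiset.map_nsmul, Multiset.sum_nsmul]

lemma vnEntropy_eq_rootEntropy {M : Matrix n n ℂ} (hM : M.IsHermitian) :
    vnEntropy M = rootEntropy M.charpoly.roots := by
  simp [vnEntropy, hM, rootEntropy, hM.roots_charpoly_eq_eigenvalues]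

lemma vnEntropy_submatrix {M : Matrix n n ℂ} (hM : M.IsHermitian) (e : m ≃ n) :
    vnEntropy (M.submatrix e e) = vnEntropy M := by
  rw [vnEntropy_eq_rootEntropy (hM.submatrix e), vnEntropy_eq_rootEntropy hM,
    ← charpoly_reindex e.symm, reindex_apply, Equiv.symm_symm]

lemma vnEntropy_transpose {M : Matrix n n ℂ} (hM : M.IsHermitian) :
    vnEntropy Mᵀ = vnEntropy M := by
  rw [vnEntropy_eq_rootEntropy hM.transpose, vnEntropy_eq_rootEntropy hM, charpoly_transpose]

lemma vnEntropy_mul_conjTranspose (W : Matrix m n ℂ) :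
    vnEntropy (W * Wᴴ) = vnEntropy (Wᴴ * W) := by
  -- the characteristic polynomials agree up to powers of `X`, and zero roots carry no entropy
  have hroots := congrArg roots (charpoly_mul_comm' W Wᴴ)
  rw [roots_mul (mul_ne_zero (pow_ne_zero _ X_ne_zero) (charpoly_monic _).ne_zero),
    roots_mul (mul_ne_zero (pow_ne_zero _ X_ne_zero) (charpoly_monic _).ne_zero),
    roots_pow, roots_pow, roots_X] at hroots
  have := congrArg rootEntropy hroots
  rwa [rootEntropy_add, rootEntropy_add, rootEntropy_nsmul_zero, rootEntropy_nsmul_zero,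
    zero_add, zero_add, ← vnEntropy_eq_rootEntropy (isHermitian_mul_conjTranspose_self W),
    ← vnEntropy_eq_rootEntropy (isHermitian_conjTranspose_mul_self W)] at this

lemma vnEntropy_vecMulVec_self {v : n → ℂ} (hv : star v ⬝ᵥ v = 1) :
    vnEntropy (vecMulVec v (star v)) = 0 := by
  have hW : vecMulVec v (star v) = replicateCol Unit v * (replicateCol Unit v)ᴴ := by
    rw [vecMulVec_eq Unit, conjTranspose_replicateCol]
  have hgram : (replicateCol Unit v)ᴴ * replicateCol Unit v = 1 := by
    ext; simp [mul_apply, ← hv, dotProduct]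
  have hone : vnEntropy (1 : Matrix Unit Unit ℂ) = 0 := by
    rw [vnEntropy_eq_rootEntropy isHermitian_one, charpoly_one, Fintype.card_unit, pow_one,
      ← C_1, roots_X_sub_C]
    simp [rootEntropy]
  rw [hW, vnEntropy_mul_conjTranspose, hgram, hone]

end Entropy

section Kronecker

open Polynomial Kronecker

lemma _root_.Matrix.IsHermitian.kronecker {m n : Type*} {M : Matrix m m ℂ} {N : Matrix n n ℂ}
    (hM : M.IsHermitian) (hN : N.IsHermitian) : (M ⊗ₖ N).IsHermitian := by
  rw [IsHermitian, conjTranspose_kronecker, hM.eq, hN.eq]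

variable {m n : Type*} [Fintype m] [DecidableEq m] [Fintype n] [DecidableEq n]

lemma vnEntropy_unitary_mul_diagonal_mul_star {U : Matrix n n ℂ} (hU : U ∈ unitary (Matrix n n ℂ))
    (d : n → ℝ) :
    vnEntropy (U * diagonal (RCLike.ofReal ∘ d) * star U) = -∑ i, d i * Real.logb 2 (d i) := by
  have hH : (U * diagonal (RCLike.ofReal ∘ d) * star U).IsHermitian := by
    rw [star_eq_conjTranspose]
    exact isHermitian_mul_mul_conjTranspose U
      (isHermitian_diagonal_of_self_adjoint _ (by ext; simp))
  rw [vnEntropy_eq_rootEntropy hH, charpoly_mul_comm, ← Matrix.mul_assoc,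
    Unitary.star_mul_self_of_mem hU, Matrix.one_mul, charpoly_diagonal, roots_prod _ _ (by
      simp [Finset.prod_ne_zero_iff, X_sub_C_ne_zero])]
  simp [rootEntropy]

lemma mul_mul_logb_mul (a b : ℝ) :
    a * b * Real.logb 2 (a * b) = a * Real.logb 2 a * b + a * (b * Real.logb 2 b) := by
  rcases eq_or_ne a 0 with rfl | ha
  · simp
  rcases eq_or_ne b 0 with rfl | hb
  · simp
  rw [Real.logb_mul ha hb]
  ring

lemma _root_.Matrix.IsHermitian.sum_eigenvalues_eq_one {M : Matrix n n ℂ} (hM : M.IsHermitian)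
    (htr : M.trace = 1) : ∑ i, hM.eigenvalues i = 1 := by
  have h := hM.trace_eq_sum_eigenvalues
  rw [htr] at h
  simpa using (congrArg Complex.re h).symm

lemma vnEntropy_kronecker {M : Matrix m m ℂ} {N : Matrix n n ℂ} (hM : M.IsHermitian)
    (hN : N.IsHermitian) (hMtr : M.trace = 1) (hNtr : N.trace = 1) :
    vnEntropy (M ⊗ₖ N) = vnEntropy M + vnEntropy N := by
  set U := (hM.eigenvectorUnitary : Matrix m m ℂ)
  set V := (hN.eigenvectorUnitary : Matrix n n ℂ)
  have hMN : M ⊗ₖ N = (U ⊗ₖ V) *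
      diagonal (RCLike.ofReal ∘ fun q : m × n => hM.eigenvalues q.1 * hN.eigenvalues q.2) *
      star (U ⊗ₖ V) := by
    conv_lhs => rw [hM.spectral_theorem, hN.spectral_theorem, Unitary.conjStarAlgAut_apply,
      Unitary.conjStarAlgAut_apply]
    simp only [star_eq_conjTranspose, conjTranspose_kronecker, mul_kronecker_mul,
      diagonal_kronecker_diagonal]
    congr
    ext
    simp
  rw [hMN, vnEntropy_unitary_mul_diagonal_mul_star
      (kronecker_mem_unitary hM.eigenvectorUnitary.2 hN.eigenvectorUnitary.2),
    vnEntropy, dif_pos hM, vnEntropy, dif_pos hN, Fintype.sum_prod_type]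
  simp only [mul_mul_logb_mul, Finset.sum_add_distrib, ← Finset.sum_mul, ← Finset.mul_sum,
    hM.sum_eigenvalues_eq_one hMtr, hN.sum_eigenvalues_eq_one hNtr]
  ring

lemma vnEntropy_eq_add_of_apply_eq_mul {l : Type*} [Fintype l] [DecidableEq l] {N : Matrix l l ℂ}
    {M : Matrix m m ℂ} {σ : Matrix n n ℂ} (e : l ≃ m × n)
    (hN : ∀ x y, N x y = M (e x).1 (e y).1 * σ (e x).2 (e y).2) (hM : M.IsHermitian)
    (hσ : σ.IsHermitian) (hMtr : M.trace = 1) (hσtr : σ.trace = 1) :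
    vnEntropy N = vnEntropy M + vnEntropy σ := by
  have : N = (M ⊗ₖ σ).submatrix e e := by ext x y; exact hN x y
  rw [this, vnEntropy_submatrix (hM.kronecker hσ), vnEntropy_kronecker hM hσ hMtr hσtr]

end Kronecker

section Bipartite

open Kronecker

lemma vnEntropy_eq_of_reduced {κ ε : Type*} [Fintype κ] [DecidableEq κ] [Fintype ε]
    [DecidableEq ε] {M : Matrix κ κ ℂ} {N : Matrix ε ε ℂ} (v : κ × ε → ℂ)
    (hM : ∀ x x', M x x' = ∑ e, v (x, e) * star (v (x', e)))
    (hN : ∀ e e', N e e' = ∑ x, v (x, e) * star (v (x, e'))) :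
    vnEntropy M = vnEntropy N := by
  set W : Matrix κ ε ℂ := of fun x e => v (x, e)
  have hMW : M = W * Wᴴ := by
    ext; simp [hM, W, mul_apply]
  have hNW : N = (Wᴴ * W)ᵀ := by
    ext; simp [hN, W, mul_apply, mul_comm]
  rw [hMW, hNW, vnEntropy_transpose (isHermitian_conjTranspose_mul_self W),
    vnEntropy_mul_conjTranspose]

lemma _root_.Matrix.PosSemidef.mul_eq_zero_of_trace_conjTranspose_mul_mul {n m : Type*}
    [Fintype n] [Fintype m] {T : Matrix n n ℂ} (hT : T.PosSemidef) {Q : Matrix n m ℂ}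
    (h : (Qᴴ * T * Q).trace = 0) : T * Q = 0 := by
  classical
  open scoped MatrixOrder in
  obtain ⟨B, rfl⟩ := CStarAlgebra.nonneg_iff_eq_star_mul_self.mp hT.nonneg
  rw [star_eq_conjTranspose, conjTranspose_mul_self_mul_eq_zero,
    ← trace_conjTranspose_mul_self_eq_zero_iff, conjTranspose_mul, Matrix.mul_assoc,
    ← h, star_eq_conjTranspose]
  simp only [Matrix.mul_assoc]

def kronVec {κ : Type*} (ε : Type*) [DecidableEq ε] (v : κ → ℂ) : Matrix (κ × ε) ε ℂ :=
  of fun p e => if p.2 = e then v p.1 else 0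

lemma kronVec_mul_mul_conjTranspose {κ ε : Type*} [Fintype ε] [DecidableEq ε] (v : κ → ℂ)
    (σ : Matrix ε ε ℂ) : kronVec ε v * σ * (kronVec ε v)ᴴ = vecMulVec v (star v) ⊗ₖ σ := by
  ext ⟨x, f⟩ ⟨y, e⟩
  simp [mul_apply, kronVec, vecMulVec_apply, apply_ite (starRingEnd ℂ)]
  ring

variable {κ ε : Type*} [Fintype κ] [Fintype ε] {v : κ → ℂ} {T : Matrix (κ × ε) (κ × ε) ℂ}

lemma trace_eq_one_of_partialTrace (hv : star v ⬝ᵥ v = 1)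
    (hptr : ∀ x y, ∑ e, T (x, e) (y, e) = v x * star (v y)) : T.trace = 1 := by
  simp only [trace, diag, Fintype.sum_prod_type, hptr]
  simpa [dotProduct, mul_comm] using hv

variable [DecidableEq ε]

lemma conjTranspose_kronVec_mul_kronVec (hv : star v ⬝ᵥ v = 1) :
    (kronVec ε v)ᴴ * kronVec ε v = 1 := by
  ext f e
  simp only [mul_apply, conjTranspose_apply, kronVec, of_apply, Fintype.sum_prod_type]
  by_cases h : f = e
  · subst h; simpa [dotProduct] using hv
  · simp [h, apply_ite (starRingEnd ℂ), eq_comm]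

lemma trace_conjTranspose_kronVec_mul_mul_kronVec (hv : star v ⬝ᵥ v = 1)
    (hptr : ∀ x y, ∑ e, T (x, e) (y, e) = v x * star (v y)) :
    ((kronVec ε v)ᴴ * T * kronVec ε v).trace = 1 := by
  calc ((kronVec ε v)ᴴ * T * kronVec ε v).trace
      = ∑ x, ∑ y, star (v x) * (∑ e, T (x, e) (y, e)) * v y := by
        simp [trace, mul_apply, kronVec, Fintype.sum_prod_type, Finset.mul_sum, Finset.sum_mul,
          apply_ite (starRingEnd ℂ)]
        simp only [Finset.sum_comm (s := (Finset.univ : Finset ε))]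
        exact Finset.sum_comm
    _ = (star v ⬝ᵥ v) * (star v ⬝ᵥ v) := by
        simp only [hptr, dotProduct, Finset.sum_mul, Finset.mul_sum]
        exact Finset.sum_congr rfl fun x _ => Finset.sum_congr rfl fun y _ => by
          simp only [Pi.star_apply]; ring
    _ = 1 := by rw [hv, one_mul]

lemma _root_.Matrix.PosSemidef.eq_vecMulVec_kronecker (hT : T.PosSemidef) (hv : star v ⬝ᵥ v = 1)
    (hptr : ∀ x y, ∑ e, T (x, e) (y, e) = v x * star (v y)) :
    ∃ σ : Matrix ε ε ℂ, σ.PosSemidef ∧ σ.trace = 1 ∧ T = vecMulVec v (star v) ⊗ₖ σ := by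
  classical
  set V := kronVec ε v
  have hP : V * Vᴴ * (V * Vᴴ) = V * Vᴴ := by
    rw [Matrix.mul_assoc, ← Matrix.mul_assoc Vᴴ, conjTranspose_kronVec_mul_kronVec hv,
      Matrix.one_mul]
  have hTP : T * (V * Vᴴ) = T := by
    have hQ : ((1 - V * Vᴴ)ᴴ * T * (1 - V * Vᴴ)).trace = 0 := by
      rw [trace_mul_comm, ← Matrix.mul_assoc]
      simp only [conjTranspose_sub, conjTranspose_one, conjTranspose_mul,
        conjTranspose_conjTranspose, Matrix.mul_sub, Matrix.sub_mul, Matrix.mul_one,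
        Matrix.one_mul, hP]
      rw [sub_self, sub_zero, trace_sub, trace_eq_one_of_partialTrace hv hptr, Matrix.mul_assoc,
        trace_mul_comm, trace_conjTranspose_kronVec_mul_mul_kronVec hv hptr, sub_self]
    have := hT.mul_eq_zero_of_trace_conjTranspose_mul_mul hQ
    rwa [Matrix.mul_sub, Matrix.mul_one, sub_eq_zero, eq_comm] at this
  have hPT : V * Vᴴ * T = T := by
    simpa [conjTranspose_mul, Matrix.mul_assoc, hT.1.eq] using congrArg conjTranspose hTP
  refine ⟨Vᴴ * T * V, hT.conjTranspose_mul_mul_same V,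
    trace_conjTranspose_kronVec_mul_mul_kronVec hv hptr, ?_⟩
  rw [← kronVec_mul_mul_conjTranspose]
  calc T = V * Vᴴ * (T * (V * Vᴴ)) := by rw [hTP, hPT]
    _ = V * (Vᴴ * T * V) * Vᴴ := by simp only [Matrix.mul_assoc]

end Bipartite

section Marginals

variable {α β γ : Type*} {ρ : Matrix (α × β × γ) (α × β × γ) ℂ}

lemma isHermitian_margAB [Fintype γ] (hρ : ρ.IsHermitian) : (margAB ρ).IsHermitian := by
  ext x y
  simp only [conjTranspose_apply, margAB, star_sum, hρ.apply]

lemma isHermitian_margBC [Fintype α] (hρ : ρ.IsHermitian) : (margBC ρ).IsHermitian := by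
  ext x y
  simp only [conjTranspose_apply, margBC, star_sum, hρ.apply]

lemma isHermitian_margB [Fintype α] [Fintype γ] (hρ : ρ.IsHermitian) :
    (margB ρ).IsHermitian := by
  ext x y
  simp only [conjTranspose_apply, margB, star_sum, hρ.apply]

variable [Fintype α] [Fintype β] [Fintype γ]

lemma trace_margAB : (margAB ρ).trace = ρ.trace := by
  simp [trace, margAB, Fintype.sum_prod_type]

lemma trace_margBC : (margBC ρ).trace = ρ.trace := by
  simp only [trace, diag, margBC, Fintype.sum_prod_type,
    Finset.sum_comm (t := (Finset.univ : Finset α))]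

lemma trace_margB : (margB ρ).trace = ρ.trace := by
  simp only [trace, diag, margB, Fintype.sum_prod_type]
  exact Finset.sum_comm

end Marginals

section Conditioning

/-- `ρ_{ABC} ⊗ σ_E`, with `E` adjoined to the conditioning system `B`. -/
def kronCond {α β γ ε : Type*} (ρ : Matrix (α × β × γ) (α × β × γ) ℂ) (σ : Matrix ε ε ℂ) :
    Matrix (α × (β × ε) × γ) (α × (β × ε) × γ) ℂ :=
  fun x y => ρ (x.1, x.2.1.1, x.2.2) (y.1, y.2.1.1, y.2.2) * σ x.2.1.2 y.2.1.2

def prodRightComm (α β γ : Type*) : (α × β) × γ ≃ (α × γ) × β where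
  toFun p := ((p.1.1, p.2), p.1.2)
  invFun p := ((p.1.1, p.2), p.1.2)
  left_inv _ := rfl
  right_inv _ := rfl

variable {α β γ ε : Type*} [Fintype α] [Fintype β] [Fintype γ] [Fintype ε]
  [DecidableEq α] [DecidableEq β] [DecidableEq γ] [DecidableEq ε]
  {ρ : Matrix (α × β × γ) (α × β × γ) ℂ}

lemma qcmi_kronCond (hρ : ρ.IsHermitian) (hρtr : ρ.trace = 1) {σ : Matrix ε ε ℂ}
    (hσ : σ.IsHermitian) (hσtr : σ.trace = 1) : qcmi (kronCond ρ σ) = qcmi ρ := by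
  have hABC := vnEntropy_eq_add_of_apply_eq_mul (N := kronCond ρ σ)
    ((Equiv.prodCongrRight fun _ => prodRightComm β ε γ).trans
      (Equiv.prodAssoc α (β × γ) ε).symm) (fun _ _ => rfl) hρ hσ hρtr hσtr
  have hAB := vnEntropy_eq_add_of_apply_eq_mul (N := margAB (kronCond ρ σ))
    (Equiv.prodAssoc α β ε).symm (fun _ _ => by simp [margAB, kronCond, Finset.sum_mul])
    (isHermitian_margAB hρ) hσ (trace_margAB.trans hρtr) hσtr
  have hBC := vnEntropy_eq_add_of_apply_eq_mul (N := margBC (kronCond ρ σ))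
    (prodRightComm β ε γ) (fun _ _ => by simp [margBC, kronCond, prodRightComm, Finset.sum_mul])
    (isHermitian_margBC hρ) hσ (trace_margBC.trans hρtr) hσtr
  have hB := vnEntropy_eq_add_of_apply_eq_mul (N := margB (kronCond ρ σ))
    (Equiv.refl _) (fun _ _ => by simp [margB, kronCond, Finset.sum_mul])
    (isHermitian_margB hρ) hσ (trace_margB.trans hρtr) hσtr
  rw [qcmi, qcmi, hABC, hAB, hBC, hB]
  ring

end Conditioning

section Extension

variable {α β γ ε : Type*} [Fintype α] [Fintype β] [Fintype γ] [Fintype ε] [DecidableEq ε]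
  {v : α × β × γ → ℂ}

lemma exists_condExt_eq_kronCond (hv : star v ⬝ᵥ v = 1)
    {τ : Matrix (α × β × γ × ε) (α × β × γ × ε) ℂ} (hτ : τ.PosSemidef)
    (hext : traceExt τ = vecMulVec v (star v)) :
    ∃ σ : Matrix ε ε ℂ, σ.PosSemidef ∧ σ.trace = 1 ∧
      condExt τ = kronCond (vecMulVec v (star v)) σ := by
  obtain ⟨σ, hσ, hσtr, hT⟩ :=
    (hτ.submatrix fun q : (α × β × γ) × ε => (q.1.1, q.1.2.1, q.1.2.2, q.2)).eq_vecMulVec_kronecker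
      hv fun x y => congrFun (congrFun hext x) y
  refine ⟨σ, hσ, hσtr, ?_⟩
  ext x y
  exact congrFun (congrFun hT ((x.1, x.2.1.1, x.2.2), x.2.1.2)) ((y.1, y.2.1.1, y.2.2), y.2.1.2)

variable [DecidableEq α] [DecidableEq β] [DecidableEq γ]

lemma qcmi_condExt_of_traceExt_eq_pure (hv : star v ⬝ᵥ v = 1)
    {τ : Matrix (α × β × γ × ε) (α × β × γ × ε) ℂ} (hτ : IsDensity τ)
    (hext : traceExt τ = vecMulVec v (star v)) :
    qcmi (condExt τ) = qcmi (vecMulVec v (star v)) := by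
  obtain ⟨σ, hσ, hσtr, hcond⟩ := exists_condExt_eq_kronCond hv hτ.1 hext
  have hψ := isDensity_vecMulVec_iff.mpr hv
  rw [hcond, qcmi_kronCond hψ.1.1 hψ.2 hσ.1 hσtr]

end Extension

lemma exists_isDensity_traceExt_eq {α β γ : Type*} [Fintype α] [Fintype β] [Fintype γ]
    {ρ : Matrix (α × β × γ) (α × β × γ) ℂ} (hρ : IsDensity ρ) :
    ∃ τ : Matrix (α × β × γ × Fin 1) (α × β × γ × Fin 1) ℂ, IsDensity τ ∧ traceExt τ = ρ := by
  refine ⟨ρ.submatrix (fun p => (p.1, p.2.1, p.2.2.1)) (fun p => (p.1, p.2.1, p.2.2.1)),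
    ⟨hρ.1.submatrix _, ?_⟩, ?_⟩
  · rw [← hρ.2]
    simp [trace, Fintype.sum_prod_type]
  · ext; simp [traceExt]

section PureState

variable {α β γ : Type*} [Fintype α] [Fintype β] [Fintype γ] [DecidableEq α] [DecidableEq γ]

lemma mutInfoAC_of_apply_eq_mul {ψ : Matrix (α × β × γ) (α × β × γ) ℂ}
    {φ : Matrix (α × γ) (α × γ) ℂ} {ϕ : Matrix β β ℂ} (hϕ : ϕ.trace = 1)
    (hψ : ∀ a b c a' b' c', ψ (a, b, c) (a', b', c') = φ (a, c) (a', c') * ϕ b b') :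
    mutInfoAC ψ = vnEntropy (fun (u v : α) => ∑ c : γ, φ (u, c) (v, c))
      + vnEntropy (fun (u v : γ) => ∑ a : α, φ (a, u) (a, v)) - vnEntropy φ := by
  have hϕ' : ∑ b, ϕ b b = 1 := hϕ
  have hA : margA ψ = fun u v => ∑ c, φ (u, c) (v, c) := by
    ext u u'
    simp only [margA, hψ]
    rw [Finset.sum_comm]
    simp [← Finset.mul_sum, hϕ']
  have hC : margC ψ = fun u v => ∑ a, φ (a, u) (a, v) := by
    ext u u'
    simp [margC, hψ, ← Finset.mul_sum, hϕ']
  have hAC : margAC ψ = φ := by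
    ext x y
    simp [margAC, hψ, ← Finset.mul_sum, hϕ']
  rw [mutInfoAC, hA, hC, hAC]

variable [DecidableEq β]

lemma sQNM_eq_half_qcmi_of_pure {v : α × β × γ → ℂ} (hv : star v ⬝ᵥ v = 1) :
    sQNM (vecMulVec v (star v)) = 1 / 2 * qcmi (vecMulVec v (star v)) := by
  rw [sQNM, ← csInf_singleton (qcmi (vecMulVec v (star v)))]
  congr 2
  ext x
  constructor
  · rintro ⟨d, τ, hτ, hext, rfl⟩
    exact qcmi_condExt_of_traceExt_eq_pure hv hτ hext
  · rintro rfl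
    obtain ⟨τ, hτ, hext⟩ := exists_isDensity_traceExt_eq (isDensity_vecMulVec_iff.mpr hv)
    exact ⟨1, τ, hτ, hext, (qcmi_condExt_of_traceExt_eq_pure hv hτ hext).symm⟩

lemma qcmi_eq_mutInfoAC_of_pure {v : α × β × γ → ℂ} (hv : star v ⬝ᵥ v = 1) :
    qcmi (vecMulVec v (star v)) = mutInfoAC (vecMulVec v (star v)) := by
  have hAB : vnEntropy (margAB (vecMulVec v (star v))) =
      vnEntropy (margC (vecMulVec v (star v))) :=
    vnEntropy_eq_of_reduced (fun p : (α × β) × γ => v (p.1.1, p.1.2, p.2))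
      (fun _ _ => rfl) (fun _ _ => by simp [margC, vecMulVec_apply, Fintype.sum_prod_type])
  have hBC : vnEntropy (margBC (vecMulVec v (star v))) =
      vnEntropy (margA (vecMulVec v (star v))) :=
    vnEntropy_eq_of_reduced (fun p : (β × γ) × α => v (p.2, p.1.1, p.1.2))
      (fun _ _ => rfl) (fun _ _ => by simp [margA, vecMulVec_apply, Fintype.sum_prod_type])
  have hB : vnEntropy (margB (vecMulVec v (star v))) =
      vnEntropy (margAC (vecMulVec v (star v))) :=
    vnEntropy_eq_of_reduced (fun p : β × (α × γ) => v (p.2.1, p.1, p.2.2))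
      (fun _ _ => by simp [margB, vecMulVec_apply, Fintype.sum_prod_type]) (fun _ _ => rfl)
  rw [qcmi, mutInfoAC, hAB, hBC, hB, vnEntropy_vecMulVec_self hv]
  ring

end PureState

/-- for a pure tripartite state `ψ_ABC`,
`N_sq(A;C|B)_ψ = (1/2) I(A;C|B)_ψ = (1/2) I(A;C)_ψ`; and if moreover
`ψ_ABC = φ_AC ⊗ ϕ_B` with `φ, ϕ` pure, then
`N_sq(A;C|B)_ψ = (1/2) I(A;C)_φ = S(A)_φ`. -/
theorem sQNM_of_pure_state {α β γ : Type*} [Fintype α] [Fintype β] [Fintype γ]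
    [DecidableEq α] [DecidableEq β] [DecidableEq γ]
    (ψ : Matrix (α × β × γ) (α × β × γ) ℂ) (hψ : IsDensity ψ) (hpure : IsPure ψ) :
    (sQNM ψ = (1/2) * qcmi ψ ∧ sQNM ψ = (1/2) * mutInfoAC ψ) ∧
    (∀ (φ : Matrix (α × γ) (α × γ) ℂ) (ϕ : Matrix β β ℂ),
      IsDensity φ → IsDensity ϕ → IsPure φ → IsPure ϕ →
      (∀ a b c a' b' c', ψ (a, b, c) (a', b', c') = φ (a, c) (a', c') * ϕ b b') →
      sQNM ψ = (1/2) * (vnEntropy (fun (u v : α) => ∑ c : γ, φ (u, c) (v, c))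
          + vnEntropy (fun (u v : γ) => ∑ a : α, φ (a, u) (a, v)) - vnEntropy φ) ∧
      sQNM ψ = vnEntropy (fun (u v : α) => ∑ c : γ, φ (u, c) (v, c))) := by
  obtain ⟨v, rfl⟩ := hpure
  have hv := isDensity_vecMulVec_iff.mp hψ
  have hN := sQNM_eq_half_qcmi_of_pure hv
  have hI := qcmi_eq_mutInfoAC_of_pure hv
  refine ⟨⟨hN, hI ▸ hN⟩, ?_⟩
  rintro φ ϕ hφ hϕ ⟨w, rfl⟩ - hfac
  have hw := isDensity_vecMulVec_iff.mp hφ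
  have hAC : vnEntropy (fun (u v : α) => ∑ c : γ, vecMulVec w (star w) (u, c) (v, c)) =
      vnEntropy (fun (u v : γ) => ∑ a : α, vecMulVec w (star w) (a, u) (a, v)) :=
    vnEntropy_eq_of_reduced w (fun _ _ => rfl) (fun _ _ => rfl)
  rw [hN, hI, mutInfoAC_of_apply_eq_mul hϕ.2 hfac, vnEntropy_vecMulVec_self hw, hAC]
  constructor <;> ring
end SQNM
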